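/- For any a > 0 and any real q with 1 < q < 1 + (e^{4a} + 4a - e^{2a}√(e^{4a} + 8a))/(8a²), we have q / tanh(a q) > 1 + √(q² - 1). -/

import Mathlib

/-!
With `u = exp (2aq)` and `ε = q - 1`, the inequality holds as soon as `u √ε ≤ 1`, because
`√(q² - 1) = √ε √(q + 1)` makes the relevant term `2 √(q² - 1) u` at most `2 √(q + 1)`.
The bound on `q` says exactly that `ε` lies below the smaller root of
`4a²ε² - (e^{4a} + 4a) ε + 1`, i.e. `e^{2a} √ε < 1 - 2aε`; multiplying by `e^{2aε}` and using
`e^{2aε} (1 - 2aε) ≤ 1` gives `u √ε < 1`.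
-/

open Real

namespace Real

theorem tanh_eq_exp_two_mul (x : ℝ) : tanh x = (exp (2 * x) - 1) / (exp (2 * x) + 1) := by
  have hx : exp x ≠ 0 := (exp_pos x).ne'
  rw [tanh_eq, exp_neg, two_mul, exp_add]
  field_simp

theorem exp_mul_one_sub_le_one (x : ℝ) : exp x * (1 - x) ≤ 1 :=
  calc exp x * (1 - x) ≤ exp x * exp (-x) :=
        mul_le_mul_of_nonneg_left (one_sub_le_exp_neg x) (exp_pos x).le
    _ = 1 := by rw [← exp_add, add_neg_cancel, exp_zero]

end Real

theorem two_mul_sqrt_sq_sub_one_mul_lt {q u : ℝ} (hq : 1 < q) (hu : u * √(q - 1) ≤ 1) :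
    2 * √(q ^ 2 - 1) * u < (1 + √(q ^ 2 - 1) + q) ^ 2 := by
  have hsplit : √(q ^ 2 - 1) = √(q - 1) * √(q + 1) := by
    rw [← sqrt_mul (by linarith)]; ring_nf
  have hroot : √(q + 1) < q + 1 := sqrt_lt_self_iff.mpr (by linarith)
  calc 2 * √(q ^ 2 - 1) * u = 2 * √(q + 1) * (u * √(q - 1)) := by rw [hsplit]; ring
    _ ≤ 2 * √(q + 1) := mul_le_of_le_one_right (by positivity) hu
    _ < (q + 1) * (q + 1) := by nlinarith [sqrt_nonneg (q + 1)]
    _ ≤ (1 + √(q ^ 2 - 1) + q) ^ 2 := by nlinarith [sqrt_nonneg (q ^ 2 - 1)]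

/-- With `u = exp (2 * x)` the claim reads `(1 + s) (u - 1) < q (u + 1)` for `s = √(q² - 1)`, and
`(1 + s - q) (1 + s + q) = 2 s` reduces it to `2 s u < (1 + s + q)²`. -/
theorem one_add_sqrt_sq_sub_one_lt_div_tanh {q x : ℝ} (hq : 1 < q) (hx : 0 < x)
    (h : exp (2 * x) * √(q - 1) ≤ 1) : 1 + √(q ^ 2 - 1) < q / tanh x := by
  set u := exp (2 * x)
  set s := √(q ^ 2 - 1)
  have hu : 1 < u := one_lt_exp_iff.mpr (by positivity)
  have hs : s ^ 2 = q ^ 2 - 1 := sq_sqrt (by nlinarith)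
  have hmain := two_mul_sqrt_sq_sub_one_mul_lt hq h
  have hkey : u * (1 + s - q) < 1 + s + q := by
    have hpos : 0 < 1 + s + q := by positivity
    refine lt_of_mul_lt_mul_right ?_ hpos.le
    calc u * (1 + s - q) * (1 + s + q) = 2 * s * u := by linear_combination u * hs
      _ < (1 + s + q) * (1 + s + q) := by rw [← sq]; exact hmain
  rw [tanh_eq_exp_two_mul, lt_div_iff₀ (div_pos (by linarith) (by linarith)), ← mul_div_assoc,
    div_lt_iff₀ (by linarith)]
  linarith

/-- `(1 - 2 a ε)² - c ε` is `((c + 4a - 8a²ε)² - (c² + 8ac)) / (16 a²)`, so it is positive for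
`ε` below the smaller root. -/
theorem mul_lt_one_sub_sq_of_lt_root {a c ε : ℝ} (ha : 0 < a) (hc : 0 < c)
    (hε : 8 * a ^ 2 * ε < c + 4 * a - √(c ^ 2 + 8 * a * c)) :
    2 * a * ε < 1 ∧ c * ε < (1 - 2 * a * ε) ^ 2 := by
  set m := √(c ^ 2 + 8 * a * c)
  have hm : m ^ 2 = c ^ 2 + 8 * a * c := sq_sqrt (by positivity)
  have hcm : c < m := by nlinarith [sqrt_nonneg (c ^ 2 + 8 * a * c), mul_pos ha hc]
  refine ⟨by nlinarith, ?_⟩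
  have hgap : m ^ 2 < (c + 4 * a - 8 * a ^ 2 * ε) ^ 2 := by nlinarith
  nlinarith [mul_pos ha ha]

theorem exp_two_mul_mul_sqrt_sub_one_lt_one {a q : ℝ} (ha : 0 < a) (hq : 1 < q)
    (hq2 : q < 1 + (exp (4 * a) + 4 * a - exp (2 * a) * √(exp (4 * a) + 8 * a)) / (8 * a ^ 2)) :
    exp (2 * (a * q)) * √(q - 1) < 1 := by
  set ε := q - 1
  have hε : 0 < ε := sub_pos.mpr hq
  have hE : exp (2 * a) ^ 2 = exp (4 * a) := by rw [← exp_nat_mul]; ring_nf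
  have hroot :
      exp (2 * a) * √(exp (4 * a) + 8 * a) = √(exp (4 * a) ^ 2 + 8 * a * exp (4 * a)) := by
    rw [← sqrt_sq (exp_pos (2 * a)).le, ← sqrt_mul (by positivity), hE]; ring_nf
  have hε_lt :
      ε < (exp (4 * a) + 4 * a - exp (2 * a) * √(exp (4 * a) + 8 * a)) / (8 * a ^ 2) := by
    linarith
  rw [lt_div_iff₀' (by positivity), hroot] at hε_lt
  obtain ⟨hlin, hquad⟩ := mul_lt_one_sub_sq_of_lt_root ha (exp_pos (4 * a)) hε_lt
  have hsqrt : exp (2 * a) * √ε < 1 - 2 * a * ε := by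
    refine lt_of_pow_lt_pow_left₀ 2 (by linarith) ?_
    rwa [mul_pow, hE, sq_sqrt hε.le]
  calc exp (2 * (a * q)) * √ε = exp (2 * a * ε) * (exp (2 * a) * √ε) := by
        rw [← mul_assoc (exp _), ← exp_add]; simp only [ε]; ring_nf
    _ < exp (2 * a * ε) * (1 - 2 * a * ε) := mul_lt_mul_of_pos_left hsqrt (exp_pos _)
    _ ≤ 1 := exp_mul_one_sub_le_one _

theorem q_div_tanh_gt (a q : ℝ) (ha : 0 < a) (hq1 : 1 < q)
    (hq2 : q < 1 + (Real.exp (4 * a) + 4 * a -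
      Real.exp (2 * a) * Real.sqrt (Real.exp (4 * a) + 8 * a)) / (8 * a ^ 2)) :
    q / Real.tanh (a * q) > 1 + Real.sqrt (q ^ 2 - 1) :=
  one_add_sqrt_sq_sub_one_lt_div_tanh hq1 (by positivity)
    (exp_two_mul_mul_sqrt_sub_one_lt_one ha hq1 hq2).le
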